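/- arXiv:1503.01008 — 9 statements merged into one kernel-verified Lean document; each statement's English description precedes it below -/
import Mathlib

section
/- Let G^c be a vertex-coloured graph with c colours on n vertices whose minimum degree δ satisfies δ ≥ n − c. Then every rainbow set of G^c is a dominating set of G^c (hence a rainbow dominating set), and consequently the tropical domination number satisfies γᵗ(G^c) = c. -/
/-- `S` is a dominating set of `G`: every vertex is in `S` or has a neighbour in `S`. -/
def IsDomSet {V : Type*} (G : SimpleGraph V) (S : Finset V) : Prop :=
  ∀ v : V, v ∈ S ∨ ∃ u ∈ S, G.Adj u v

/-- `S` is tropical w.r.t. the colouring `col`: every colour appears on a vertex of `S`. -/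
def IsTropical {V C : Type*} (col : V → C) (S : Finset V) : Prop :=
  ∀ ch : C, ∃ v ∈ S, col v = ch

/-- The tropical domination number: the least size of a tropical dominating set. -/
noncomputable def tropDomNum {V C : Type*} (G : SimpleGraph V) (col : V → C) : ℕ :=
  sInf {k : ℕ | ∃ S : Finset V, IsDomSet G S ∧ IsTropical col S ∧ S.card = k}

/-- if the minimum degree of a vertex-coloured graph with `c` colours on
`n` vertices satisfies `δ ≥ n - c`, then every rainbow set (a set of `c` vertices
containing each colour exactly once) is a dominating set, and `γᵗ(G^c) = c`. -/
theorem rainbow_set_dominates_of_large_minDegree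
    {V C : Type*} [Fintype V] [Fintype C] (G : SimpleGraph V) [DecidableRel G.Adj]
    (col : V → C) (hsurj : Function.Surjective col)
    (n c : ℕ) (hn : Fintype.card V = n) (hc : Fintype.card C = c)
    (hδ : n - c ≤ G.minDegree) :
    (∀ S : Finset V, S.card = c → IsTropical col S → IsDomSet G S) ∧
      tropDomNum G col = c := by
  classical
  -- part 1
  have hdom : ∀ S : Finset V, S.card = c → IsTropical col S → IsDomSet G S := by
    intro S hcard _ v
    by_contra h
    push_neg at h
    obtain ⟨hvS, hnb⟩ := h
    have hsub : insert v (G.neighborFinset v) ⊆ Finset.univ \ S := by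
      intro u hu
      simp only [Finset.mem_insert, SimpleGraph.mem_neighborFinset] at hu
      simp only [Finset.mem_sdiff, Finset.mem_univ, true_and]
      rcases hu with rfl | hadj
      · exact hvS
      · intro huS
        exact hnb u huS (hadj.symm)
    have hcard1 : (insert v (G.neighborFinset v)).card = G.degree v + 1 := by
      rw [Finset.card_insert_of_notMem (by simp), SimpleGraph.card_neighborFinset_eq_degree]
    have hle := Finset.card_le_card hsub
    rw [hcard1, Finset.card_sdiff_of_subset (Finset.subset_univ S), Finset.card_univ, hn, hcard] at hle
    have hmin : n - c ≤ G.degree v := le_trans hδ (G.minDegree_le_degree v)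
    omega
  refine ⟨hdom, ?_⟩
  -- rainbow set exists
  choose g hg using hsurj
  set S₀ : Finset V := Finset.univ.image g with hS₀
  have hginj : Function.Injective g := by
    intro a b hab
    have := congrArg col hab
    rwa [hg, hg] at this
  have hS₀card : S₀.card = c := by
    rw [hS₀, Finset.card_image_of_injective _ hginj, Finset.card_univ, hc]
  have hS₀trop : IsTropical col S₀ := by
    intro ch
    exact ⟨g ch, Finset.mem_image_of_mem g (Finset.mem_univ ch), hg ch⟩
  have hmem : c ∈ {k : ℕ | ∃ S : Finset V, IsDomSet G S ∧ IsTropical col S ∧ S.card = k} :=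
    ⟨S₀, hdom S₀ hS₀card hS₀trop, hS₀trop, hS₀card⟩
  -- lower bound: every tropical set has card ≥ c
  have hlb : ∀ k ∈ {k : ℕ | ∃ S : Finset V, IsDomSet G S ∧ IsTropical col S ∧ S.card = k},
      c ≤ k := by
    rintro k ⟨S, -, htrop, rfl⟩
    choose f hf hcf using htrop
    have : (Finset.univ : Finset C).card ≤ S.card := by
      apply Finset.card_le_card_of_injOn f (fun ch _ => hf ch)
      intro a _ b _ hab
      rw [← hcf a, ← hcf b, hab]
    rwa [Finset.card_univ, hc] at this
  have hne : {k : ℕ | ∃ S : Finset V, IsDomSet G S ∧ IsTropical col S ∧ S.card = k}.Nonempty :=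
    ⟨c, hmem⟩
  exact le_antisymm (Nat.sInf_le hmem) (hlb _ (Nat.sInf_mem hne))
end

section
/- Let G^c be a vertex-coloured graph with c colours, n vertices, and m edges, and let k be a positive integer. If m ≥ C(n − k + c − 1, 2) + (n − k) and n > k + c − 2, then γᵗ(G^c) ≤ k. (Here C(a,2) = a(a−1)/2 denotes a binomial coefficient.) -/
/-!
Adding to a dominating set `S₀ ∋ v` one vertex of each colour other than `col v` makes it
tropical, so `γᵗ ≤ γ + c - 1` and it suffices to dominate `G` with `κ = k + 1 - c` vertices.
That follows from a Vizing-type bound: if no `κ` vertices dominate `U`, then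
`2 e(G[U]) + 1 ≤ (|U| - κ)²`. For the induction step remove from `U` the closed neighbourhood `C`
of a vertex `v ∈ U` of maximum degree `d` in `G[U]`. The rest `U'` cannot be dominated by `κ - 1`
vertices, hence no vertex has more than `|U'| - κ + 1` neighbours in `U'` (it would dominate
them, and its non-neighbours in `U'` themselves). As `v` has none, `C` sends at most
`d (|U'| - κ + 1)` edges to `U'`, while its degree sum in `G[U]` is at most `(d + 1) d`.
When `c > k` the edge hypothesis already exceeds `C(n, 2)`.
-/

open Finset

namespace SimpleGraph

variable {V : Type*}

def Dominates (G : SimpleGraph V) (S U : Finset V) : Prop :=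
  ∀ v ∈ U, v ∈ S ∨ ∃ u ∈ S, G.Adj u v

def degreeIn (G : SimpleGraph V) [DecidableRel G.Adj] (A : Finset V) (x : V) : ℕ :=
  #{y ∈ A | G.Adj x y}

variable {G : SimpleGraph V} {S U : Finset V} {κ : ℕ}

lemma card_lt_of_forall_not_dominates (hU : ∀ S : Finset V, #S ≤ κ → ¬G.Dominates S U) :
    κ < #U := by
  by_contra! h
  exact hU U h fun v hv => Or.inl hv

lemma Dominates.insert_of_sdiff [DecidableEq V] {T : Finset V} {v : V}
    (h : G.Dominates S (U \ T)) (hT : ∀ y ∈ T, y = v ∨ G.Adj v y) :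
    G.Dominates (insert v S) U := by
  intro y hy
  by_cases hyT : y ∈ T
  · rcases hT y hyT with rfl | hvy
    · exact Or.inl (mem_insert_self y S)
    · exact Or.inr ⟨v, mem_insert_self v S, hvy⟩
  · rcases h y (mem_sdiff.2 ⟨hy, hyT⟩) with hyS | ⟨u, huS, huy⟩
    · exact Or.inl (mem_insert_of_mem hyS)
    · exact Or.inr ⟨u, mem_insert_of_mem huS, huy⟩

variable [DecidableRel G.Adj]

lemma degreeIn_lt_card {x : V} (hx : x ∈ U) : G.degreeIn U x < #U :=
  card_lt_card (filter_ssubset.2 ⟨x, hx, G.irrefl⟩)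

lemma degreeIn_union [DecidableEq V] {A B : Finset V} (h : Disjoint A B) (x : V) :
    G.degreeIn (A ∪ B) x = G.degreeIn A x + G.degreeIn B x := by
  rw [degreeIn, filter_union, card_union_of_disjoint (disjoint_filter_filter h)]
  rfl

lemma sum_degreeIn_comm (A B : Finset V) :
    ∑ x ∈ A, G.degreeIn B x = ∑ y ∈ B, G.degreeIn A y := by
  refine (sum_card_bipartiteAbove_eq_sum_card_bipartiteBelow G.Adj).trans
    (sum_congr rfl fun y _ => ?_)
  simp only [bipartiteBelow, degreeIn, G.adj_comm]

lemma sum_degreeIn_union [DecidableEq V] {A B : Finset V} (h : Disjoint A B) :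
    ∑ x ∈ A ∪ B, G.degreeIn (A ∪ B) x =
      ∑ x ∈ A, G.degreeIn A x + ∑ x ∈ B, G.degreeIn A x + ∑ x ∈ B, G.degreeIn (A ∪ B) x := by
  rw [sum_union h, sum_congr rfl fun x _ => degreeIn_union h x, sum_add_distrib,
    sum_degreeIn_comm A B]

lemma degreeIn_add_le_card [DecidableEq V]
    (hU : ∀ S : Finset V, #S ≤ κ → ¬G.Dominates S U) (x : V) : G.degreeIn U x + κ ≤ #U := by
  by_contra! h
  refine hU (insert x {y ∈ U | ¬G.Adj x y}) ?_ fun y hy => ?_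
  · have := card_filter_add_card_filter_not (s := U) (fun y => G.Adj x y)
    have := card_insert_le x {y ∈ U | ¬G.Adj x y}
    rw [degreeIn] at h
    omega
  · by_cases hxy : G.Adj x y
    · exact Or.inr ⟨x, mem_insert_self _ _, hxy⟩
    · exact Or.inl (mem_insert_of_mem (mem_filter.2 ⟨hy, hxy⟩))

theorem sum_degreeIn_add_one_le_sq [DecidableEq V] (κ : ℕ) {U : Finset V}
    (hU : ∀ S : Finset V, #S ≤ κ → ¬G.Dominates S U) :
    ∑ x ∈ U, G.degreeIn U x + 1 ≤ (#U - κ) ^ 2 := by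
  induction κ generalizing U with
  | zero =>
    have hpos := card_lt_of_forall_not_dominates hU
    have hsum : ∑ x ∈ U, G.degreeIn U x ≤ #U * (#U - 1) := by
      simpa using sum_le_card_nsmul U _ _ fun x hx => Nat.le_sub_one_of_lt (degreeIn_lt_card hx)
    obtain ⟨u, hu⟩ : ∃ u, #U = u + 1 := ⟨#U - 1, by omega⟩
    rw [hu] at hsum ⊢
    simp only [Nat.add_sub_cancel, Nat.sub_zero] at hsum ⊢
    nlinarith
  | succ κ ih =>
    obtain ⟨v, hvU, hvmax⟩ := U.exists_max_image (G.degreeIn U)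
      (card_pos.1 (by have := card_lt_of_forall_not_dominates hU; omega))
    set d := G.degreeIn U v
    set C := insert v {y ∈ U | G.Adj v y}
    set U' := U \ C
    have hCU : C ⊆ U := insert_subset hvU (filter_subset _ _)
    have hcardC : #C = d + 1 := card_insert_of_notMem (by simp)
    have hU' : ∀ S : Finset V, #S ≤ κ → ¬G.Dominates S U' := fun S hS hdom =>
      hU (insert v S) (card_insert_le v S |>.trans (by omega))
        (hdom.insert_of_sdiff fun y hy => (mem_insert.1 hy).imp_right fun h => (mem_filter.1 h).2)
    have hκ := card_lt_of_forall_not_dominates hU'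
    have hCU_deg : ∑ x ∈ C, G.degreeIn U x ≤ (d + 1) * d := by
      simpa [hcardC] using sum_le_card_nsmul C _ _ fun x hx => hvmax x (hCU hx)
    have hCU'_deg : ∑ x ∈ C, G.degreeIn U' x ≤ d * (#U' - κ) := by
      have hv : G.degreeIn U' v = 0 := card_eq_zero.2 <| filter_eq_empty_iff.2 fun y hy hvy =>
        (mem_sdiff.1 hy).2 (mem_insert_of_mem (mem_filter.2 ⟨(mem_sdiff.1 hy).1, hvy⟩))
      rw [sum_insert (by simp), hv, zero_add]
      refine (sum_le_card_nsmul _ _ _ fun x _ => ?_).trans_eq (smul_eq_mul _ _)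
      have := degreeIn_add_le_card hU' x
      omega
    have hsplit := sum_degreeIn_union (G := G) (sdiff_disjoint : Disjoint U' C)
    rw [sdiff_union_of_subset hCU] at hsplit
    have hIH := ih hU'
    have hcard : #U = #U' + (d + 1) := hcardC ▸ (card_sdiff_add_card_eq_card hCU).symm
    obtain ⟨b, hb⟩ : ∃ b, #U' - κ = b + 1 := ⟨#U' - κ - 1, by omega⟩
    rw [hb] at hIH hCU'_deg
    rw [show #U - (κ + 1) = b + 1 + d by omega, hsplit]
    nlinarith

lemma degreeIn_univ [Fintype V] (x : V) : G.degreeIn univ x = G.degree x := by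
  rw [degreeIn, ← card_neighborFinset_eq_degree, neighborFinset_eq_filter]

theorem exists_isDomSet_card_le [Fintype V] [DecidableEq V] (κ : ℕ)
    (h : (Fintype.card V - κ) ^ 2 ≤ 2 * #G.edgeFinset) :
    ∃ S : Finset V, #S ≤ κ ∧ IsDomSet G S := by
  by_contra! hS
  have := sum_degreeIn_add_one_le_sq κ (U := univ) fun S hSκ hdom =>
    hS S hSκ fun v => hdom v (mem_univ v)
  rw [card_univ, sum_congr rfl fun x _ => degreeIn_univ x, sum_degrees_eq_twice_card_edges] at this
  omega

end SimpleGraph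

lemma IsDomSet.nonempty {V : Type*} [Nonempty V] {G : SimpleGraph V} {S : Finset V}
    (h : IsDomSet G S) : S.Nonempty :=
  (h (Classical.arbitrary V)).elim (fun hv => ⟨_, hv⟩) fun ⟨u, hu, _⟩ => ⟨u, hu⟩

lemma IsDomSet.mono {V : Type*} {G : SimpleGraph V} {S T : Finset V} (hST : S ⊆ T)
    (h : IsDomSet G S) : IsDomSet G T :=
  fun v => (h v).imp (fun hv => hST hv) fun ⟨u, hu, huv⟩ => ⟨u, hST hu, huv⟩

theorem tropDomNum_le_card_add {V C : Type*} [Fintype C] {G : SimpleGraph V}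
    {col : V → C} (hcol : Function.Surjective col) {S : Finset V} (hdom : IsDomSet G S)
    (hS : S.Nonempty) : tropDomNum G col ≤ #S + (Fintype.card C - 1) := by
  classical
  obtain ⟨v, hv⟩ := hS
  let T := S ∪ (univ.erase (col v)).image (Function.surjInv hcol)
  have htrop : IsTropical col T := fun ch => by
    by_cases h : ch = col v
    · exact ⟨v, mem_union_left _ hv, h.symm⟩
    · exact ⟨_, mem_union_right _ (mem_image_of_mem _ (mem_erase.2 ⟨h, mem_univ _⟩)),
        Function.surjInv_eq hcol ch⟩
  calc tropDomNum G col ≤ #T := Nat.sInf_le ⟨T, hdom.mono subset_union_left, htrop, rfl⟩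
    _ ≤ #S + #(univ.erase (col v)) :=
      (card_union_le _ _).trans (Nat.add_le_add_left card_image_le _)
    _ = #S + (Fintype.card C - 1) := by rw [card_erase_of_mem (mem_univ _), card_univ]

lemma sq_le_two_mul_choose_two_add {d e : ℕ} (h : d ≤ 2 * e) : d ^ 2 ≤ 2 * (d.choose 2 + e) := by
  have := Nat.div_mul_cancel (Nat.even_mul_pred_self d).two_dvd
  rw [Nat.choose_two_right]
  rcases d with _ | d
  · simp
  · simp only [Nat.add_sub_cancel] at this ⊢
    nlinarith

theorem tropDomNum_le_of_many_edges_general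
    {V C : Type*} [Fintype V] [Fintype C] (G : SimpleGraph V)
    (col : V → C) (hsurj : Function.Surjective col)
    (n c m k : ℕ) (hn : Fintype.card V = n) (hc : Fintype.card C = c)
    (hm : G.edgeSet.ncard = m)
    (hedges : (n - k + c - 1).choose 2 + (n - k) ≤ m)
    (hnk : k + c - 2 < n) :
    tropDomNum G col ≤ k := by
  classical
  have hm' : #G.edgeFinset = m := by rw [← hm, ← SimpleGraph.coe_edgeFinset, Set.ncard_coe_finset]
  have : Nonempty V := Fintype.card_pos_iff.1 (by omega)
  have hc1 : 1 ≤ c := hc ▸ Fintype.card_pos_iff.2 ⟨col (Classical.arbitrary V)⟩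
  have hck : c ≤ k := by
    by_contra! hkc
    have := hm' ▸ hn ▸ G.card_edgeFinset_le_card_choose_two
    have := Nat.choose_le_choose 2 (show n ≤ n - k + c - 1 by omega)
    omega
  obtain ⟨S, hSκ, hdom⟩ := G.exists_isDomSet_card_le (k + 1 - c) <| by
    rw [hn, hm', show n - (k + 1 - c) = n - k + c - 1 by omega]
    exact (sq_le_two_mul_choose_two_add (e := n - k) (by omega)).trans (by omega)
  calc tropDomNum G col ≤ #S + (Fintype.card C - 1) :=
        tropDomNum_le_card_add hsurj hdom hdom.nonempty
    _ ≤ k := by omega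

/-- if `m ≥ C(n-k+c-1, 2) + (n-k)` and `n > k+c-2`, then `γᵗ(G^c) ≤ k`. -/
theorem tropDomNum_le_of_many_edges
    {V C : Type*} [Fintype V] [Fintype C] (G : SimpleGraph V)
    (col : V → C) (hsurj : Function.Surjective col)
    (n c m k : ℕ) (hn : Fintype.card V = n) (hc : Fintype.card C = c)
    (hm : G.edgeSet.ncard = m) (hk : 1 ≤ k)
    (hedges : (n - k + c - 1).choose 2 + (n - k) ≤ m)
    (hnk : k + c - 2 < n) :
    tropDomNum G col ≤ k :=
  tropDomNum_le_of_many_edges_general G col hsurj n c m k hn hc hm hedges hnk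
end

section
/- For all integers c ≥ 1, k ≥ c, and n ≥ 2k − c + 1, there exists a vertex-coloured graph G^c on n vertices with exactly c colours and exactly C(n − k + c − 1, 2) + (n − k) edges whose tropical domination number equals k. (Such a graph is obtained from a clique on n − k + c − 1 vertices, of which c − 1 receive unique colours and the remaining n − k vertices form a set A receiving the one remaining colour, together with an additional independent set B of k − c + 1 vertices, also coloured with the remaining colour, so that each vertex of A is adjacent to exactly one vertex of B and every vertex of B has at least one neighbour in A.) -/
/-- auxiliary relation: clique on `[0,m)`, plus each `a ∈ [c-1, m)` matched to
`m + ((a - (c-1)) % bb)`. -/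
def tdRel (c m bb : ℕ) {n : ℕ} (u v : Fin n) : Prop :=
  (u.val < m ∧ v.val < m) ∨ (c - 1 ≤ u.val ∧ u.val < m ∧ v.val = m + (u.val - (c-1)) % bb)

instance (c m bb : ℕ) {n : ℕ} (u v : Fin n) : Decidable (tdRel c m bb u v) := by
  unfold tdRel; infer_instance

def tdG (c m bb n : ℕ) : SimpleGraph (Fin n) := SimpleGraph.fromRel (tdRel c m bb)

/-- the matching partner function (total). -/
def matchF (c m bb n : ℕ) (i : Fin n) : Fin n :=
  if h : m + (i.val - (c-1)) % bb < n then ⟨_, h⟩ else i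

/-- for all `c ≥ 1`, `k ≥ c` and `n ≥ 2k - c + 1` there is a vertex-coloured
graph on `n` vertices with exactly `c` colours, exactly `C(n-k+c-1, 2) + (n-k)` edges,
and tropical domination number exactly `k`. -/
theorem exists_graph_edges_eq_tropDomNum_eq
    (c k n : ℕ) (hc : 1 ≤ c) (hk : c ≤ k) (hn : 2 * k - c + 1 ≤ n) :
    ∃ (G : SimpleGraph (Fin n)) (col : Fin n → Fin c),
      Function.Surjective col ∧
      G.edgeSet.ncard = (n - k + c - 1).choose 2 + (n - k) ∧
      tropDomNum G col = k := by
  set m := n - k + c - 1 with hm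
  set bb := k - c + 1 with hbb
  have hbb1 : 1 ≤ bb := by omega
  have hnk : k + 1 ≤ n := by omega
  have hmbn : m + bb = n := by omega
  have hcm : c ≤ m := by omega
  have hmn : m < n := by omega
  -- basic fact on matchF
  have hmatch : ∀ i : Fin n, (matchF c m bb n i).val = m + (i.val - (c-1)) % bb := by
    intro i
    have h : m + (i.val - (c-1)) % bb < n := by
      have := Nat.mod_lt (i.val - (c-1)) (show 0 < bb by omega)
      omega
    simp [matchF, h]
  have hmatchge : ∀ i : Fin n, m ≤ (matchF c m bb n i).val := by
    intro i; rw [hmatch]; omega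
  set G := tdG c m bb n with hG
  have hadj : ∀ u v : Fin n, G.Adj u v ↔ u ≠ v ∧ (tdRel c m bb u v ∨ tdRel c m bb v u) := by
    intro u v; rw [hG]; exact SimpleGraph.fromRel_adj _ u v
  set col : Fin n → Fin c := fun v => if h : v.val < c - 1 then ⟨v.val + 1, by omega⟩ else ⟨0, hc⟩
    with hcol
  refine ⟨G, col, ?_, ?_, ?_⟩
  · -- surjectivity
    intro ch
    rcases Nat.eq_zero_or_pos ch.val with h0 | h1
    · refine ⟨⟨m, hmn⟩, ?_⟩
      simp only [hcol]
      rw [dif_neg (by omega)]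
      exact Fin.ext (by simp [h0])
    · refine ⟨⟨ch.val - 1, by have := ch.isLt; omega⟩, ?_⟩
      simp only [hcol]
      rw [dif_pos (by have := ch.isLt; omega)]
      exact Fin.ext (by simp; omega)
  · -- edge count
    classical
    set E1 : Finset (Sym2 (Fin n)) :=
      Finset.image (Sym2.map (Fin.castLE hmn.le)) (⊤ : SimpleGraph (Fin m)).edgeFinset with hE1
    set Afin : Finset (Fin n) := Finset.attachFin (Finset.Ico (c-1) m) (fun x hx => by
      simp only [Finset.mem_Ico] at hx; omega) with hA
    set E2 : Finset (Sym2 (Fin n)) :=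
      Finset.image (fun i => s(i, matchF c m bb n i)) Afin with hE2
    have hset : G.edgeSet = ↑(E1 ∪ E2) := by
      ext e
      induction e using Sym2.ind with
      | _ u v =>
        rw [SimpleGraph.mem_edgeSet, hadj]
        simp only [Finset.coe_union, Set.mem_union, Finset.mem_coe, hE1, hE2, Finset.mem_image]
        constructor
        · rintro ⟨hne, hr⟩
          have hcase : ∀ a b : Fin n, a ≠ b → tdRel c m bb a b →
              (∃ e' ∈ (⊤ : SimpleGraph (Fin m)).edgeFinset, Sym2.map (Fin.castLE hmn.le) e' = s(a, b))
              ∨ (∃ i ∈ Afin, s(i, matchF c m bb n i) = s(a, b)) := by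
            intro a b hab hr
            rcases hr with ⟨ha, hb⟩ | ⟨h1, h2, h3⟩
            · left
              refine ⟨s(⟨a.val, ha⟩, ⟨b.val, hb⟩), ?_, ?_⟩
              · rw [SimpleGraph.mem_edgeFinset, SimpleGraph.mem_edgeSet, SimpleGraph.top_adj]
                intro h
                injection h with hv
                exact hab (Fin.ext hv)
              · rw [Sym2.map_pair_eq]
                congr 1
            · right
              refine ⟨a, ?_, ?_⟩
              · rw [Finset.mem_attachFin, Finset.mem_Ico]; exact ⟨h1, h2⟩
              · have hmb : matchF c m bb n a = b := Fin.ext (by rw [hmatch, h3])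
                rw [hmb]
          rcases hr with hr | hr
          · exact hcase u v hne hr
          · rcases hcase v u (Ne.symm hne) hr with h | h
            · left; obtain ⟨e', he, heq⟩ := h; exact ⟨e', he, by rw [heq, Sym2.eq_swap]⟩
            · right; obtain ⟨i, hi, heq⟩ := h; exact ⟨i, hi, by rw [heq, Sym2.eq_swap]⟩
        · rintro (⟨e', he', heq⟩ | ⟨i, hi, heq⟩)
          · induction e' using Sym2.ind with
            | _ a b =>
              rw [SimpleGraph.mem_edgeFinset, SimpleGraph.mem_edgeSet, SimpleGraph.top_adj] at he'
              rw [Sym2.map_pair_eq, Sym2.eq_iff] at heq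
              have hclique : ∀ x y : Fin m,  x ≠ y →
                  (Fin.castLE hmn.le x = u ∧ Fin.castLE hmn.le y = v) →
                  (u ≠ v ∧ (tdRel c m bb u v ∨ tdRel c m bb v u)) := by
                rintro x y hxy ⟨hx, hy⟩
                subst hx; subst hy
                refine ⟨fun h => hxy (Fin.castLE_injective hmn.le h), Or.inl (Or.inl ⟨x.isLt, y.isLt⟩)⟩
              rcases heq with h | h
              · exact hclique a b he' h
              · exact hclique b a (Ne.symm he') ⟨h.2, h.1⟩
          · rw [Finset.mem_attachFin, Finset.mem_Ico] at hi
            rw [Sym2.eq_iff] at heq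
            have hilt : i.val < m := hi.2
            have hmge := hmatchge i
            have hrel : tdRel c m bb i (matchF c m bb n i) :=
              Or.inr ⟨hi.1, hi.2, hmatch i⟩
            have hne : i ≠ matchF c m bb n i := by
              intro h; rw [← h] at hmge; omega
            rcases heq with ⟨h1, h2⟩ | ⟨h1, h2⟩
            · subst h1; subst h2; exact ⟨hne, Or.inl hrel⟩
            · subst h1; subst h2; exact ⟨Ne.symm hne, Or.inr hrel⟩
    rw [hset, Set.ncard_coe_finset]
    have hdisj : Disjoint E1 E2 := by
      rw [Finset.disjoint_left]
      rintro e he1 he2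
      rw [hE1, Finset.mem_image] at he1
      rw [hE2, Finset.mem_image] at he2
      obtain ⟨e', _, heq1⟩ := he1
      obtain ⟨i, _, heq2⟩ := he2
      induction e' using Sym2.ind with
      | _ a b =>
        rw [Sym2.map_pair_eq] at heq1
        rw [← heq2, Sym2.eq_iff] at heq1
        have hmge := hmatchge i
        have h1 : (Fin.castLE hmn.le a).val < m := a.isLt
        have h2 : (Fin.castLE hmn.le b).val < m := b.isLt
        rcases heq1 with ⟨h1', h2'⟩ | ⟨h1', h2'⟩
        · have hv := congrArg Fin.val h2'
          rw [Fin.coe_castLE] at hv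
          have := b.isLt; omega
        · have hv := congrArg Fin.val h1'
          rw [Fin.coe_castLE] at hv
          have := a.isLt; omega
    rw [Finset.card_union_of_disjoint hdisj]
    have hc1 : E1.card = m.choose 2 := by
      rw [hE1, Finset.card_image_of_injective _ (Sym2.map.injective (Fin.castLE_injective hmn.le)),
        SimpleGraph.card_edgeFinset_top_eq_card_choose_two, Fintype.card_fin]
    have hc2 : E2.card = n - k := by
      rw [hE2, Finset.card_image_of_injOn, hA, Finset.card_attachFin, Nat.card_Ico]
      · omega
      · intro i hi j hj hij
        simp only at hij
        rw [Sym2.eq_iff] at hij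
        have hi' : c - 1 ≤ i.val ∧ i.val < m := by
          rw [hA, Finset.mem_coe, Finset.mem_attachFin, Finset.mem_Ico] at hi; exact hi
        rcases hij with ⟨h, _⟩ | ⟨h1, h2⟩
        · exact h
        · have := hmatchge j; have h1' := congrArg Fin.val h1
          omega
    rw [hc1, hc2, hm]
  · -- tropical domination number
    classical
    -- upper bound witness
    set S0 : Finset (Fin n) := Finset.attachFin (Finset.range (c-1) ∪ Finset.Ico m n)
      (fun x hx => by
        rcases Finset.mem_union.mp hx with h | h
        · rw [Finset.mem_range] at h; omega
        · exact (Finset.mem_Ico.mp h).2) with hS0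
    have hS0mem : ∀ v : Fin n, v ∈ S0 ↔ (v.val < c - 1 ∨ m ≤ v.val) := by
      intro v
      rw [hS0, Finset.mem_attachFin, Finset.mem_union, Finset.mem_range, Finset.mem_Ico]
      constructor
      · rintro (h | h); exacts [Or.inl h, Or.inr h.1]
      · rintro (h | h); exacts [Or.inl h, Or.inr ⟨h, v.isLt⟩]
    have hS0dom : IsDomSet G S0 := by
      intro v
      by_cases h1 : v.val < c - 1
      · exact Or.inl ((hS0mem v).mpr (Or.inl h1))
      · by_cases h2 : m ≤ v.val
        · exact Or.inl ((hS0mem v).mpr (Or.inr h2))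
        · refine Or.inr ⟨matchF c m bb n v, (hS0mem _).mpr (Or.inr (hmatchge v)), ?_⟩
          rw [hadj]
          refine ⟨?_, Or.inr (Or.inr ⟨by omega, by omega, hmatch v⟩)⟩
          intro h
          have := hmatchge v
          rw [h] at this
          omega
    have hS0trop : IsTropical col S0 := by
      intro ch
      rcases Nat.eq_zero_or_pos ch.val with h0 | h1
      · refine ⟨⟨m, hmn⟩, (hS0mem _).mpr (Or.inr le_rfl), ?_⟩
        simp only [hcol]
        rw [dif_neg (by omega)]
        exact Fin.ext (by simp [h0])
      · refine ⟨⟨ch.val - 1, by have := ch.isLt; omega⟩,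
          (hS0mem _).mpr (Or.inl (show ch.val - 1 < c - 1 by have := ch.isLt; omega)), ?_⟩
        simp only [hcol]
        rw [dif_pos (by have := ch.isLt; omega)]
        exact Fin.ext (by simp; omega)
    have hS0card : S0.card = k := by
      rw [hS0, Finset.card_attachFin, Finset.card_union_of_disjoint, Finset.card_range,
        Nat.card_Ico]
      · omega
      · rw [Finset.disjoint_left]
        intro x hx hx'
        rw [Finset.mem_range] at hx
        rw [Finset.mem_Ico] at hx'
        omega
    -- lower bound
    have lower : ∀ S : Finset (Fin n), IsDomSet G S → IsTropical col S → k ≤ S.card := by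
      intro S hdom htrop
      have hstep1 : ∀ j : ℕ, (hj : j < c - 1) → (⟨j, by omega⟩ : Fin n) ∈ S := by
        intro j hj
        obtain ⟨v, hvS, hv⟩ := htrop ⟨j+1, by omega⟩
        have hvval : v.val = j := by
          by_cases h : v.val < c - 1
          · simp only [hcol, dif_pos h] at hv
            have := congrArg Fin.val hv
            simp at this; omega
          · exfalso
            simp only [hcol, dif_neg h] at hv
            have := congrArg Fin.val hv
            simp at this
        have hveq : v = ⟨j, by omega⟩ := Fin.ext hvval
        rwa [hveq] at hvS
      have hcard1 : c - 1 ≤ (S.filter (fun v => v.val < c - 1)).card := by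
        have hsub : Finset.attachFin (Finset.range (c-1))
            (fun x hx => by rw [Finset.mem_range] at hx; omega)
            ⊆ S.filter (fun v => v.val < c - 1) := by
          intro x hx
          rw [Finset.mem_attachFin, Finset.mem_range] at hx
          rw [Finset.mem_filter]
          refine ⟨?_, hx⟩
          have := hstep1 x.val hx
          have hxeq : x = (⟨x.val, by omega⟩ : Fin n) := Fin.ext rfl
          rwa [← hxeq] at this
        have := Finset.card_le_card hsub
        rwa [Finset.card_attachFin, Finset.card_range] at this
      have hcard2 : bb ≤ (S.filter (fun v => ¬ v.val < c - 1)).card := by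
        have hsurj : Set.SurjOn (fun v : Fin n => if v.val < m then m + (v.val - (c-1)) % bb else v.val)
            ↑(S.filter (fun v => ¬ v.val < c - 1)) ↑(Finset.Ico m n) := by
          intro β hβ
          simp only [Finset.coe_Ico, Set.mem_Ico] at hβ
          rcases hdom ⟨β, hβ.2⟩ with hin | ⟨u, huS, hadj'⟩
          · refine ⟨⟨β, hβ.2⟩, ?_, ?_⟩
            · rw [Finset.mem_coe, Finset.mem_filter]
              exact ⟨hin, by simp; omega⟩
            · simp only
              rw [if_neg (by simp; omega)]
          · rw [hadj] at hadj'
            obtain ⟨hne, hr⟩ := hadj'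
            rcases hr with (⟨_, h⟩ | ⟨h1, h2, h3⟩) | (⟨h, _⟩ | ⟨_, h, _⟩)
            · simp at h; omega
            · refine ⟨u, ?_, ?_⟩
              · rw [Finset.mem_coe, Finset.mem_filter]
                exact ⟨huS, by omega⟩
              · simp only
                rw [if_pos h2]
                simpa using h3.symm
            · simp at h; omega
            · simp at h; omega
        have hle := Finset.card_le_card_of_surjOn _ hsurj
        rw [Nat.card_Ico] at hle
        omega
      have hsplit := Finset.card_filter_add_card_filter_not
        (s := S) (p := fun v => v.val < c - 1)
      omega
    apply le_antisymm
    · exact Nat.sInf_le ⟨S0, hS0dom, hS0trop, hS0card⟩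
    · refine le_csInf ⟨k, S0, hS0dom, hS0trop, hS0card⟩ ?_
      rintro j ⟨S, hd, ht, hcard⟩
      exact hcard ▸ lower S hd ht
end

section
/- Let G^c be a vertex-coloured graph on n vertices with c colours whose minimum degree δ satisfies δ > (n − 1) − √(n − 1). Then γᵗ(G^c) ≤ c + 1. -/
/-- if `δ > (n-1) - √(n-1)` (a super-dense graph), then `γᵗ(G^c) ≤ c + 1`. -/
theorem tropDomNum_le_of_superdense
    {V C : Type*} [Fintype V] [Fintype C] (G : SimpleGraph V) [DecidableRel G.Adj]
    (col : V → C) (hsurj : Function.Surjective col)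
    (n c : ℕ) (hn : Fintype.card V = n) (hc : Fintype.card C = c)
    (hδ : ((n : ℝ) - 1) - Real.sqrt ((n : ℝ) - 1) < (G.minDegree : ℝ)) :
    tropDomNum G col ≤ c + 1 := by
  classical
  have key : ∃ S : Finset V, IsDomSet G S ∧ IsTropical col S ∧ S.card ≤ c + 1 := by
    by_cases hV : Nonempty V
    · -- main case
      haveI := hV
      have hn1 : 1 ≤ n := by rw [← hn]; exact Fintype.card_pos
      set rep : C → V := fun ch => (hsurj ch).choose with hrep
      have hrepcol : ∀ ch, col (rep ch) = ch := fun ch => (hsurj ch).choose_spec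
      set D : Finset V := Finset.univ.image rep with hD
      have hDcard : D.card ≤ c := by
        calc D.card ≤ (Finset.univ : Finset C).card := Finset.card_image_le
          _ = c := by rw [Finset.card_univ, hc]
      have htropD : ∀ T : Finset V, D ⊆ T → IsTropical col T := by
        intro T hT ch
        exact ⟨rep ch, hT (Finset.mem_image_of_mem rep (Finset.mem_univ ch)), hrepcol ch⟩
      set k := n - 1 - G.minDegree with hkdef
      have hminle : G.minDegree ≤ n - 1 := by
        have := G.minDegree_le_degree Classical.ofNonempty
        have h2 := G.degree_lt_card_verts Classical.ofNonempty
        rw [hn] at h2; omega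
      have hkk : k * k < n := by
        rcases Nat.eq_zero_or_pos k with h0 | hpos
        · rw [h0]; omega
        · have hkr : (k : ℝ) = (n : ℝ) - 1 - G.minDegree := by
            have h1 : G.minDegree + k = n - 1 := by omega
            have h2 : ((G.minDegree : ℝ)) + k = ((n - 1 : ℕ) : ℝ) := by
              exact_mod_cast congrArg (Nat.cast : ℕ → ℝ) h1
            rw [Nat.cast_sub hn1] at h2
            push_cast at h2 ⊢
            linarith
          have hlt : (k : ℝ) < Real.sqrt ((n : ℝ) - 1) := by
            rw [hkr]; linarith
          have hnn : (0 : ℝ) ≤ (n : ℝ) - 1 := by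
            have : (1 : ℝ) ≤ n := by exact_mod_cast hn1
            linarith
          have : (k : ℝ) * k < ((n : ℝ) - 1) := by
            calc (k : ℝ) * k < Real.sqrt ((n : ℝ) - 1) * Real.sqrt ((n : ℝ) - 1) :=
                  mul_lt_mul'' hlt hlt (by positivity) (by positivity)
              _ = (n : ℝ) - 1 := Real.mul_self_sqrt hnn
          have : (k : ℝ) * k < (n : ℝ) := by linarith
          exact_mod_cast this
      -- every vertex has at most k non-neighbours (other than itself)
      have hdegA : ∀ v : V,
          (Finset.univ.filter (fun w => w ≠ v ∧ ¬ G.Adj v w)).card ≤ k := by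
        intro v
        have heq : Finset.univ.filter (fun w => w ≠ v ∧ ¬ G.Adj v w)
            = Finset.univ \ insert v (G.neighborFinset v) := by
          ext w
          simp only [Finset.mem_filter, Finset.mem_univ, true_and, Finset.mem_sdiff,
            Finset.mem_insert, SimpleGraph.mem_neighborFinset]
          tauto
        have hins : (insert v (G.neighborFinset v)).card = G.degree v + 1 := by
          rw [Finset.card_insert_of_notMem (by simp)]
          rw [G.card_neighborFinset_eq_degree]
        rw [heq, Finset.card_sdiff_of_subset (Finset.subset_univ _), Finset.card_univ, hn, hins]
        have h1 := G.minDegree_le_degree v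
        omega
      set U : Finset V :=
        Finset.univ.filter (fun v => v ∉ D ∧ ∀ d ∈ D, ¬ G.Adj d v) with hU
      rcases Finset.eq_empty_or_nonempty U with hUe | hUne
      · -- D already dominates
        refine ⟨D, ?_, htropD D (le_refl _), by omega⟩
        intro v
        by_cases hvD : v ∈ D
        · exact Or.inl hvD
        · right
          by_contra hcon
          push_neg at hcon
          have : v ∈ U := by
            rw [hU]
            simp only [Finset.mem_filter, Finset.mem_univ, true_and]
            exact ⟨hvD, fun d hd => hcon d hd⟩
          rw [hUe] at this
          exact absurd this (Finset.notMem_empty v)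
      · -- U nonempty; |U| ≤ k, counting argument for w
        obtain ⟨u0, hu0⟩ := hUne
        have hu0' := hu0
        rw [hU, Finset.mem_filter] at hu0'
        have hd0 : rep (col u0) ∈ D := Finset.mem_image_of_mem rep (Finset.mem_univ _)
        set d0 := rep (col u0) with hd0def
        have hUsub : U ⊆ Finset.univ.filter (fun w => w ≠ d0 ∧ ¬ G.Adj d0 w) := by
          intro u hu
          rw [hU, Finset.mem_filter] at hu
          simp only [Finset.mem_filter, Finset.mem_univ, true_and]
          constructor
          · intro h; exact hu.2.1 (h ▸ hd0)
          · exact hu.2.2 d0 hd0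
        have hUcard : U.card ≤ k := le_trans (Finset.card_le_card hUsub) (hdegA d0)
        set bad : Finset V :=
          U.biUnion (fun u => Finset.univ.filter (fun w => w ≠ u ∧ ¬ G.Adj u w)) with hbad
        have hbadcard : bad.card < n := by
          calc bad.card ≤ ∑ u ∈ U, (Finset.univ.filter (fun w => w ≠ u ∧ ¬ G.Adj u w)).card :=
                Finset.card_biUnion_le
            _ ≤ ∑ _u ∈ U, k := Finset.sum_le_sum (fun u _ => hdegA u)
            _ = U.card * k := by rw [Finset.sum_const, smul_eq_mul]
            _ ≤ k * k := Nat.mul_le_mul_right k hUcard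
            _ < n := hkk
        have hex : ∃ w : V, w ∉ bad := by
          by_contra hcon
          push_neg at hcon
          have : (Finset.univ : Finset V) ⊆ bad := fun w _ => hcon w
          have := Finset.card_le_card this
          rw [Finset.card_univ, hn] at this
          omega
        obtain ⟨w, hw⟩ := hex
        refine ⟨insert w D, ?_, htropD _ (Finset.subset_insert w D), ?_⟩
        · intro v
          by_cases hvD : v ∈ D
          · exact Or.inl (Finset.mem_insert_of_mem hvD)
          by_cases hadj : ∃ d ∈ D, G.Adj d v
          · obtain ⟨d, hd, hdv⟩ := hadj
            exact Or.inr ⟨d, Finset.mem_insert_of_mem hd, hdv⟩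
          push_neg at hadj
          have hvU : v ∈ U := by
            rw [hU]
            simp only [Finset.mem_filter, Finset.mem_univ, true_and]
            exact ⟨hvD, hadj⟩
          have hwv : ¬ (w ≠ v ∧ ¬ G.Adj v w) := by
            intro hcon
            apply hw
            rw [hbad]
            refine Finset.mem_biUnion.mpr ⟨v, hvU, ?_⟩
            simp only [Finset.mem_filter, Finset.mem_univ, true_and]
            exact hcon
          by_cases hwev : w = v
          · exact Or.inl (hwev ▸ Finset.mem_insert_self w D)
          · have : G.Adj v w := by tauto
            exact Or.inr ⟨w, Finset.mem_insert_self w D, this.symm⟩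
        · calc (insert w D).card ≤ D.card + 1 := Finset.card_insert_le w D
            _ ≤ c + 1 := by omega
    · -- V empty
      refine ⟨∅, ?_, ?_, by simp⟩
      · intro v; exact absurd ⟨v⟩ hV
      · intro ch; exact absurd ⟨(hsurj ch).choose⟩ hV
  obtain ⟨S, hdom, htrop, hcard⟩ := key
  calc tropDomNum G col ≤ S.card := Nat.sInf_le ⟨S, hdom, htrop, rfl⟩
    _ ≤ c + 1 := hcard
end

section
/- Let G be a finite simple graph on n vertices whose minimum degree δ satisfies δ > (n − 1) − √(n − 1). Then the domination number of G satisfies γ(G) ≤ 2. -/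
/-- The domination number: the least size of a dominating set. -/
noncomputable def domNum {V : Type*} (G : SimpleGraph V) : ℕ :=
  sInf {k : ℕ | ∃ S : Finset V, IsDomSet G S ∧ S.card = k}

/-- if the minimum degree of a graph on `n` vertices satisfies
`δ > (n-1) - √(n-1)`, then its domination number is at most `2`. -/
theorem domNum_le_two_of_superdense
    {V : Type*} [Fintype V] (G : SimpleGraph V) [DecidableRel G.Adj]
    (n : ℕ) (hn : Fintype.card V = n)
    (hδ : ((n : ℝ) - 1) - Real.sqrt ((n : ℝ) - 1) < (G.minDegree : ℝ)) :
    domNum G ≤ 2 := by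

  classical
  suffices h : ∃ S : Finset V, IsDomSet G S ∧ S.card ≤ 2 by
    obtain ⟨S, hS, hc⟩ := h
    exact le_trans (Nat.sInf_le ⟨S, hS, rfl⟩) hc
  by_cases hV : IsEmpty V
  · exact ⟨∅, fun v => (hV.false v).elim, by simp⟩
  rw [not_isEmpty_iff] at hV
  obtain ⟨u⟩ := hV
  set d := G.minDegree with hd
  have hn1 : 1 ≤ n := hn ▸ Fintype.card_pos_iff.2 ⟨u⟩
  have hdn : d + 1 ≤ n := by
    have h1 := G.minDegree_le_degree u
    have h2 := G.degree_lt_card_verts u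
    omega
  -- closed neighborhood
  set C : V → Finset V := fun x => insert x (G.neighborFinset x) with hC
  have hCcard : ∀ x, (C x).card = G.degree x + 1 := by
    intro x
    rw [hC]
    simp only [Finset.card_insert_of_notMem (by simp [G.irrefl] :
      x ∉ G.neighborFinset x)]
    rw [G.card_neighborFinset_eq_degree]
  have hmemC : ∀ x v, v ∈ C x ↔ (v = x ∨ G.Adj x v) := by
    intro x v; simp [hC]
  set M : Finset V := Finset.univ \ C u with hM
  by_cases hMe : M = ∅
  · refine ⟨{u}, fun v => ?_, by simp⟩
    have hv : v ∈ C u := by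
      by_contra hv
      have : v ∈ M := by simp [hM, hv]
      simp [hMe] at this
    rcases (hmemC u v).1 hv with h | h
    · exact Or.inl (by simp [h])
    · exact Or.inr ⟨u, by simp, h⟩
  by_cases hw : ∃ w : V, M ⊆ C w
  · obtain ⟨w, hw⟩ := hw
    refine ⟨{u, w}, fun v => ?_, Finset.card_le_two⟩
    by_cases hv : v ∈ C u
    · rcases (hmemC u v).1 hv with h | h
      · exact Or.inl (by simp [h])
      · exact Or.inr ⟨u, by simp, h⟩
    · have : v ∈ C w := hw (by simp [hM, hv])
      rcases (hmemC w v).1 this with h | h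
      · exact Or.inl (by simp [h])
      · exact Or.inr ⟨w, by simp, h⟩
  -- contradiction case
  exfalso
  push_neg at hw
  set k := n - (d + 1) with hk
  have hcomp : ∀ x : V, (Finset.univ \ C x).card ≤ k := by
    intro x
    rw [Finset.card_sdiff_of_subset (Finset.subset_univ _), hCcard, Finset.card_univ, hn]
    have := G.minDegree_le_degree x
    omega
  have hcover : (Finset.univ : Finset V) ⊆ M.biUnion (fun x => Finset.univ \ C x) := by
    intro w _
    obtain ⟨x, hxM, hxw⟩ := Finset.not_subset.1 (hw w)
    refine Finset.mem_biUnion.2 ⟨x, hxM, ?_⟩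
    simp only [Finset.mem_sdiff, Finset.mem_univ, true_and]
    intro hwx
    apply hxw
    rcases (hmemC x w).1 hwx with h | h
    · exact (hmemC w x).2 (Or.inl h.symm)
    · exact (hmemC w x).2 (Or.inr h.symm)
  have hcount : n ≤ k * k := by
    have h1 : n ≤ ∑ x ∈ M, (Finset.univ \ C x).card := by
      calc n = (Finset.univ : Finset V).card := by rw [Finset.card_univ, hn]
        _ ≤ (M.biUnion (fun x => Finset.univ \ C x)).card := Finset.card_le_card hcover
        _ ≤ _ := Finset.card_biUnion_le
    have h2 : ∑ x ∈ M, (Finset.univ \ C x).card ≤ M.card * k :=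
      Finset.sum_le_card_nsmul _ _ _ (fun x _ => hcomp x)
    have h3 : M.card ≤ k := hcomp u
    calc n ≤ M.card * k := le_trans h1 h2
      _ ≤ k * k := Nat.mul_le_mul_right k h3
  -- real part: k * k < n
  have hkr : (k : ℝ) = (n : ℝ) - 1 - (d : ℝ) := by
    rw [hk]
    push_cast [Nat.cast_sub hdn]
    ring
  have hlt : (k : ℝ) < Real.sqrt ((n : ℝ) - 1) := by
    rw [hkr]; linarith
  have hsq : (k : ℝ) ^ 2 < (n : ℝ) - 1 :=
    (Real.lt_sqrt (by positivity)).1 hlt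
  have : (k : ℕ) ^ 2 < n := by
    have : ((k ^ 2 : ℕ) : ℝ) < (n : ℝ) := by push_cast; nlinarith
    exact_mod_cast this
  have : k * k < n := by rw [← pow_two]; exact this
  omega
end

section
/- Fix a real number p with 0 < p < 1 and set b = 1/(1 − p). For each integer n ≥ 2 let c(n) = ⌊log_b n − log_b((log_b n)·(ln n))⌋ + 2. Then the sequence E_n = C(n, c(n)) · (1 − (1 − p)^{c(n)})^{n − c(n)} · c(n)! / c(n)^{c(n)} tends to infinity as n → ∞. (E_n is the expected number of rainbow dominating sets of size c(n) in the random graph G(n, p) whose vertices are coloured with c(n) colours uniformly and independently at random.) -/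
/-! Write `t = ln n` and `a = ln b`. The threshold gives `a · c ≥ t - 2 ln t + ln a + a`, so
`q = (1 - p)^c = e^{-a c}` satisfies `n q ≤ (1 - p) t² / a`; as `q → 0`, this yields
`(1 - q)^{n - c} ≥ exp (-n q / (1 - q)) ≥ exp (-(1 - p/2) t² / a)`. On the other hand
`c = O(t)`, so `C(n, c) c! / c^c ≥ (n / 2c)^c = exp ((1 - o(1)) t² / a)`. Hence
`E_n ≥ exp (p t² / 4a) → ∞`. The margin `p t² / a` comes from the `+ a` in the first bound,
i.e. from `c` exceeding the threshold by at least one. -/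

open Filter Real
open scoped Nat

noncomputable def expectedRainbowDominating (p : ℝ) (n k : ℕ) : ℝ :=
  n.choose k * (1 - (1 - p) ^ k) ^ (n - k) * k ! / (k : ℝ) ^ k

lemma div_two_mul_pow_le_choose_mul_factorial_div_pow {n k : ℕ} (h : 2 * k ≤ n) :
    ((n : ℝ) / (2 * k)) ^ k ≤ n.choose k * k ! / (k : ℝ) ^ k := by
  have hdesc : (n + 1 - k) ^ k ≤ n.choose k * k ! := by
    rw [mul_comm, ← Nat.descFactorial_eq_factorial_mul_choose]
    exact Nat.pow_sub_le_descFactorial n k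
  have hhalf : (n : ℝ) / 2 ≤ (n + 1 - k : ℕ) := by
    rw [Nat.cast_sub (by omega)]; push_cast
    have : (2 * k : ℝ) ≤ n := by exact_mod_cast h
    linarith
  rw [← div_div, div_pow]
  gcongr
  calc ((n : ℝ) / 2) ^ k ≤ ((n + 1 - k : ℕ) : ℝ) ^ k := by gcongr
    _ ≤ n.choose k * k ! := by exact_mod_cast hdesc

lemma exp_neg_mul_div_one_sub_le_one_sub_pow {q : ℝ} (hq1 : q < 1) (N : ℕ) :
    exp (-(N * (q / (1 - q)))) ≤ (1 - q) ^ N := by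
  have hpos : 0 < 1 - q := sub_pos.2 hq1
  have h : exp (-(q / (1 - q))) ≤ 1 - q := by
    have := one_sub_inv_le_log_of_pos hpos
    rw [← exp_le_exp, exp_log hpos] at this
    convert this using 2
    field_simp
    ring
  calc exp (-(N * (q / (1 - q)))) = exp (-(q / (1 - q))) ^ N := by
        rw [← exp_nat_mul]; ring_nf
    _ ≤ (1 - q) ^ N := pow_le_pow_left₀ (exp_pos _).le h N

lemma exp_sub_le_expectedRainbowDominating {p : ℝ} (hp0 : 0 < p) (hp1 : p < 1) {n k : ℕ}
    (hk : 0 < k) (hkn : 2 * k ≤ n) :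
    exp (k * log (n / (2 * k)) - n * ((1 - p) ^ k / (1 - (1 - p) ^ k))) ≤
      expectedRainbowDominating p n k := by
  set q := (1 - p) ^ k
  have hq1 : q < 1 := pow_lt_one₀ (by linarith) (by linarith) hk.ne'
  have hn : (0 : ℝ) < n / (2 * k) := by
    have hk0 : (0 : ℝ) < k := by exact_mod_cast hk
    have : (2 * k : ℝ) ≤ n := by exact_mod_cast hkn
    exact div_pos (by linarith) (by positivity)
  rw [sub_eq_add_neg, exp_add, ← log_rpow hn, exp_log (by positivity), rpow_natCast,
    expectedRainbowDominating, mul_right_comm, mul_div_right_comm]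
  gcongr
  · exact div_two_mul_pow_le_choose_mul_factorial_div_pow hkn
  · calc exp (-(n * (q / (1 - q)))) ≤ exp (-((n - k : ℕ) * (q / (1 - q)))) := by
          gcongr
          exact Nat.sub_le n k
      _ ≤ (1 - q) ^ (n - k) := exp_neg_mul_div_one_sub_le_one_sub_pow hq1 _

noncomputable def rainbowThreshold (b x : ℝ) : ℝ := logb b x - logb b (logb b x * log x)

lemma log_mul_rainbowThreshold {b x : ℝ} (hb : 1 < b) (hx : 1 < x) :
    log b * rainbowThreshold b x = log x - 2 * log (log x) + log (log b) := by
  have hlb : log b ≠ 0 := (log_pos hb).ne'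
  have hlx : log x ≠ 0 := (log_pos hx).ne'
  simp only [rainbowThreshold, logb]
  rw [log_mul (div_ne_zero hlx hlb) hlx, log_div hlx hlb]
  field_simp
  ring

lemma eventually_add_mul_log_le (C a : ℝ) {δ : ℝ} (hδ : 0 < δ) :
    ∀ᶠ t in atTop, C + a * log t ≤ δ * t := by
  have hε : 0 < δ / (2 * (|a| + 1)) := by positivity
  filter_upwards [isLittleO_log_id_atTop.bound hε, eventually_ge_atTop (2 * C / δ),
    eventually_ge_atTop 1] with t hlog hC ht
  replace hlog : log t ≤ δ / (2 * (|a| + 1)) * t := by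
    simpa [abs_of_nonneg (log_nonneg ht), abs_of_nonneg (zero_le_one.trans ht)] using hlog
  have hlog0 := log_nonneg ht
  have ha : a * log t ≤ |a| * log t := mul_le_mul_of_nonneg_right (le_abs_self a) hlog0
  have : |a| * log t ≤ δ / 2 * t := by
    calc |a| * log t ≤ (|a| + 1) * (δ / (2 * (|a| + 1)) * t) := by gcongr; linarith
      _ = δ / 2 * t := by field_simp
  rw [div_le_iff₀' hδ] at hC
  linarith

lemma eventually_mul_log_le_log_mul_rainbowThreshold {b δ : ℝ} (hb : 1 < b) (hδ : 0 < δ) :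
    ∀ᶠ x in atTop, (1 - δ) * log x ≤ log b * rainbowThreshold b x := by
  filter_upwards [tendsto_log_atTop.eventually (eventually_add_mul_log_le (-log (log b)) 2 hδ),
    eventually_gt_atTop 1] with x hlog hx
  rw [log_mul_rainbowThreshold hb hx]
  linarith

lemma eventually_log_mul_rainbowThreshold_le {b : ℝ} (hb : 1 < b) :
    ∀ᶠ x in atTop, log b * rainbowThreshold b x ≤ log x + log (log b) := by
  filter_upwards [tendsto_log_atTop.eventually_ge_atTop 1, eventually_gt_atTop 1] with x hlog hx
  rw [log_mul_rainbowThreshold hb hx]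
  linarith [log_nonneg hlog]

lemma mul_inv_pow_le_of_rainbowThreshold_add_one_le {b x : ℝ} (hb : 1 < b) (hx : 1 < x) {k : ℕ}
    (hk : rainbowThreshold b x + 1 ≤ k) : x * b⁻¹ ^ k ≤ b⁻¹ * (logb b x * log x) := by
  have hb0 : 0 < b := by linarith
  have hL : 0 < logb b x * log x := mul_pos (logb_pos hb hx) (log_pos hx)
  have hpow : b⁻¹ ^ k ≤ b ^ (-(rainbowThreshold b x + 1)) := by
    rw [inv_pow, ← rpow_natCast, ← rpow_neg hb0.le]
    exact rpow_le_rpow_of_exponent_le hb.le (by linarith)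
  have hval : b ^ (-(rainbowThreshold b x + 1)) = b⁻¹ * (logb b x * log x) / x := by
    rw [rainbowThreshold, neg_add, neg_sub, rpow_add hb0, rpow_sub hb0, rpow_logb hb0 hb.ne' hL,
      rpow_logb hb0 hb.ne' (by linarith), rpow_neg_one]
    ring
  rw [hval] at hpow
  rw [le_div_iff₀ (by linarith)] at hpow
  linarith

lemma tendsto_rainbowThreshold_atTop {b : ℝ} (hb : 1 < b) :
    Tendsto (rainbowThreshold b) atTop atTop := by
  have hlb : 0 < log b := log_pos hb
  refine tendsto_atTop_mono' atTop ?_ ((tendsto_log_atTop.const_mul_atTop (by positivity :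
    (0 : ℝ) < 1 / 2 / log b)))
  filter_upwards [eventually_mul_log_le_log_mul_rainbowThreshold hb (one_half_pos (α := ℝ))]
    with x hx
  rw [div_mul_eq_mul_div, div_le_iff₀' hlb]
  linarith

lemma eventually_sq_log_le_mul_log_div {b δ D : ℝ} (hb : 1 < b) (hδ : 0 < δ) (hδ1 : δ ≤ 1)
    {k : ℕ → ℕ}
    (hk : ∀ᶠ n : ℕ in atTop,
      (k n : ℝ) ∈ Set.Icc (rainbowThreshold b n + 1) (rainbowThreshold b n + D)) :
    ∀ᶠ n : ℕ in atTop,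
      0 < k n ∧ 2 * k n ≤ n ∧
        (1 - δ) ^ 2 * (log n ^ 2 / log b) ≤ k n * log (n / (2 * k n)) := by
  have hlb : 0 < log b := log_pos hb
  set K := log (log b) + log b * D
  have hnat := tendsto_natCast_atTop_atTop (R := ℝ)
  filter_upwards [hk, hnat.eventually (eventually_mul_log_le_log_mul_rainbowThreshold hb hδ),
    hnat.eventually (eventually_log_mul_rainbowThreshold_le hb),
    (tendsto_log_atTop.comp hnat).eventually
      (eventually_add_mul_log_le (log (2 * (1 + |K|) / log b)) 1 hδ),
    (tendsto_log_atTop.comp hnat).eventually_ge_atTop 1, eventually_gt_atTop 0]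
    with n ⟨hk_low, hk_up⟩ hthr_low hthr_up hlog ht hn
  simp only [Function.comp_apply] at hlog ht
  set t := log n
  have hkpos : 0 < k n := by
    have : 0 < (k n : ℝ) := by nlinarith
    exact_mod_cast this
  have hk0 : (0 : ℝ) < k n := by exact_mod_cast hkpos
  have h2k : 2 * (k n : ℝ) ≤ 2 * (1 + |K|) / log b * t := by
    rw [div_mul_eq_mul_div, le_div_iff₀ hlb]
    nlinarith [le_abs_self K, abs_nonneg K]
  have hlog2k : log (2 * k n) ≤ δ * t := by
    calc log (2 * k n) ≤ log (2 * (1 + |K|) / log b * t) := log_le_log (by positivity) h2k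
      _ = log (2 * (1 + |K|) / log b) + 1 * log t := by
          rw [log_mul (by positivity) (by linarith), one_mul]
      _ ≤ δ * t := hlog
  replace hn : (0 : ℝ) < n := by exact_mod_cast hn
  refine ⟨hkpos, ?_, ?_⟩
  · have : (2 * k n : ℝ) ≤ n := by
      rw [← log_le_log_iff (by positivity) hn]
      nlinarith
    exact_mod_cast this
  · rw [log_div hn.ne' (by positivity)]
    have hk_ge : (1 - δ) * t / log b ≤ k n := by
      rw [div_le_iff₀ hlb]; nlinarith
    calc (1 - δ) ^ 2 * (t ^ 2 / log b) = (1 - δ) * t / log b * ((1 - δ) * t) := by ring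
      _ ≤ k n * (t - log (2 * k n)) := by
          gcongr
          nlinarith

lemma eventually_mul_div_one_sub_le {p b : ℝ} (hp0 : 0 < p) (hp1 : p < 1) (hb : b = 1 / (1 - p))
    {k : ℕ → ℕ} (hk : ∀ᶠ n : ℕ in atTop, rainbowThreshold b n + 1 ≤ k n) :
    ∀ᶠ n : ℕ in atTop,
      n * ((1 - p) ^ k n / (1 - (1 - p) ^ k n)) ≤ (1 - p / 2) * (log n ^ 2 / log b) := by
  have hb1 : 1 < b := hb ▸ one_lt_one_div (by linarith) (by linarith)
  have hbinv : b⁻¹ = 1 - p := by rw [hb, one_div, inv_inv]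
  have hk_top : Tendsto k atTop atTop := by
    rw [← tendsto_natCast_atTop_iff (R := ℝ)]
    exact tendsto_atTop_mono' _ hk (tendsto_atTop_add_const_right _ 1
      ((tendsto_rainbowThreshold_atTop hb1).comp tendsto_natCast_atTop_atTop))
  have hq_small : ∀ᶠ n : ℕ in atTop, (1 - p) ^ k n ≤ p / 2 :=
    ((tendsto_pow_atTop_nhds_zero_of_lt_one (by linarith) (by linarith)).comp hk_top).eventually
      (eventually_le_nhds (by linarith))
  filter_upwards [hk, hq_small, eventually_gt_atTop 1] with n hkn hq hn
  have hnq := mul_inv_pow_le_of_rainbowThreshold_add_one_le hb1 (by exact_mod_cast hn) hkn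
  rw [hbinv, logb, div_mul_eq_mul_div, ← sq] at hnq
  have hX : 0 ≤ log n ^ 2 / log b := div_nonneg (sq_nonneg _) (log_pos hb1).le
  calc (n : ℝ) * ((1 - p) ^ k n / (1 - (1 - p) ^ k n))
      = n * (1 - p) ^ k n / (1 - (1 - p) ^ k n) := by rw [mul_div_assoc]
    _ ≤ (1 - p) * (log n ^ 2 / log b) / (1 - (1 - p) ^ k n) := by
        gcongr
        linarith
    _ ≤ (1 - p / 2) * (log n ^ 2 / log b) := by
        rw [div_le_iff₀ (by linarith)]
        have hp2 : (0 : ℝ) ≤ 1 - p / 2 := by linarith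
        nlinarith [mul_nonneg (mul_nonneg hX hp2) (sub_nonneg.2 hq), mul_nonneg hX (sq_nonneg p)]

theorem tendsto_expectedRainbowDominating_atTop {p b D : ℝ} (hp0 : 0 < p) (hp1 : p < 1)
    (hb : b = 1 / (1 - p)) {k : ℕ → ℕ}
    (hk : ∀ᶠ n : ℕ in atTop,
      (k n : ℝ) ∈ Set.Icc (rainbowThreshold b n + 1) (rainbowThreshold b n + D)) :
    Tendsto (fun n ↦ expectedRainbowDominating p n (k n)) atTop atTop := by
  have hb1 : 1 < b := hb ▸ one_lt_one_div (by linarith) (by linarith)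
  have hlb : 0 < log b := log_pos hb1
  have key : ∀ᶠ n : ℕ in atTop,
      exp (p / 4 * (log n ^ 2 / log b)) ≤ expectedRainbowDominating p n (k n) := by
    filter_upwards [eventually_sq_log_le_mul_log_div hb1 (δ := p / 8) (by positivity)
        (by linarith) hk, eventually_mul_div_one_sub_le hp0 hp1 hb (hk.mono fun _ h ↦ h.1)]
      with n ⟨hk0, hkn, hmain⟩ hrest
    refine le_trans ?_ (exp_sub_le_expectedRainbowDominating hp0 hp1 hk0 hkn)
    gcongr
    have hX : 0 ≤ log n ^ 2 / log b := by positivity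
    nlinarith [mul_nonneg hX (sq_nonneg p)]
  refine tendsto_atTop_mono' atTop key (tendsto_exp_atTop.comp ?_)
  refine Tendsto.const_mul_atTop (by positivity) (Tendsto.atTop_div_const hlb ?_)
  exact (tendsto_pow_atTop two_ne_zero).comp (tendsto_log_atTop.comp tendsto_natCast_atTop_atTop)

lemma Int.toNat_floor_add_two_mem_Icc {x : ℝ} (hx : -2 ≤ x) :
    (((⌊x⌋ + 2).toNat : ℕ) : ℝ) ∈ Set.Icc (x + 1) (x + 2) := by
  have h : -2 ≤ ⌊x⌋ := Int.le_floor.2 (by exact_mod_cast hx)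
  have hcast : (((⌊x⌋ + 2).toNat : ℕ) : ℝ) = ⌊x⌋ + 2 := by
    rw [← Int.cast_natCast, Int.toNat_of_nonneg (by omega)]; push_cast; rfl
  rw [hcast]
  constructor <;> linarith [Int.floor_le x, Int.lt_floor_add_one x]

/-- fix `0 < p < 1`, set `b = 1/(1-p)` and, for each `n`,
`c(n) = ⌊log_b n - log_b((log_b n)·(ln n))⌋ + 2`.  Then the expected number
`E_n = C(n, c(n)) · (1 - (1-p)^{c(n)})^{n - c(n)} · c(n)! / c(n)^{c(n)}`
of rainbow dominating sets of size `c(n)` in a randomly coloured `G(n,p)`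
tends to infinity as `n → ∞`. -/
theorem expected_rainbow_dominating_tendsto_atTop
    (p : ℝ) (hp0 : 0 < p) (hp1 : p < 1)
    (b : ℝ) (hb : b = 1 / (1 - p))
    (c : ℕ → ℕ)
    (hc : ∀ n : ℕ,
      c n = (⌊Real.logb b n - Real.logb b (Real.logb b n * Real.log n)⌋ + 2).toNat) :
    Tendsto
      (fun n : ℕ =>
        (n.choose (c n) : ℝ) * (1 - (1 - p) ^ (c n)) ^ (n - c n) *
          ((c n).factorial : ℝ) / ((c n : ℝ) ^ (c n)))
      atTop atTop := by
  have hb1 : 1 < b := hb ▸ one_lt_one_div (by linarith) (by linarith)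
  refine tendsto_expectedRainbowDominating_atTop hp0 hp1 hb (D := 2) ?_
  filter_upwards [tendsto_natCast_atTop_atTop.eventually
    (eventually_mul_log_le_log_mul_rainbowThreshold hb1 one_pos)] with n hn
  rw [sub_self, zero_mul, mul_nonneg_iff_of_pos_left (log_pos hb1)] at hn
  rw [hc n]
  exact Int.toNat_floor_add_two_mem_Icc (by linarith)
end

section
/- Let P^c be a vertex-coloured path on n ≥ 1 vertices with c colours. Then the tropical domination number satisfies γᵗ(P^c) ≥ (n + 2c)/5. -/
lemma dom_card_bound (n : ℕ) (S : Finset (Fin n))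
    (hdom : IsDomSet (SimpleGraph.pathGraph n) S) : n ≤ 3 * S.card := by
  classical
  set T : Finset (Fin n) := S.biUnion (fun u =>
    Finset.univ.filter (fun v => v = u ∨ (SimpleGraph.pathGraph n).Adj u v)) with hT
  have hsub : (Finset.univ : Finset (Fin n)) ⊆ T := by
    intro v _
    rcases hdom v with hv | ⟨u, hu, hadj⟩
    · exact Finset.mem_biUnion.2 ⟨v, hv, by simp⟩
    · exact Finset.mem_biUnion.2 ⟨u, hu, by simp [hadj]⟩
  have h1 : n ≤ T.card := by
    calc n = (Finset.univ : Finset (Fin n)).card := by simp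
    _ ≤ T.card := Finset.card_le_card hsub
  refine h1.trans ?_
  refine (Finset.card_biUnion_le).trans ?_
  rw [mul_comm, Finset.card_eq_sum_ones S, Finset.sum_mul, one_mul]
  apply Finset.sum_le_sum
  intro u _
  have himg : (Finset.univ.filter
      (fun v => v = u ∨ (SimpleGraph.pathGraph n).Adj u v)).image (fun v : Fin n => v.val)
      ⊆ {u.val - 1, u.val, u.val + 1} := by
    intro x hx
    simp only [Finset.mem_image, Finset.mem_filter] at hx
    obtain ⟨v, ⟨_, hv⟩, rfl⟩ := hx
    rcases hv with rfl | hadj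
    · simp
    · rcases SimpleGraph.pathGraph_adj.1 hadj with h | h
      · simp [← h]
      · simp [← h, Nat.add_sub_cancel]
  calc (Finset.univ.filter
      (fun v => v = u ∨ (SimpleGraph.pathGraph n).Adj u v)).card
      = ((Finset.univ.filter
      (fun v => v = u ∨ (SimpleGraph.pathGraph n).Adj u v)).image
        (fun v : Fin n => v.val)).card := by
        rw [Finset.card_image_of_injective _ Fin.val_injective]
    _ ≤ ({u.val - 1, u.val, u.val + 1} : Finset ℕ).card := Finset.card_le_card himg
    _ ≤ 3 := by
        refine (Finset.card_insert_le _ _).trans (Nat.succ_le_succ ?_)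
        exact (Finset.card_insert_le _ _).trans (by simp)

/-- for a vertex-coloured path on `n ≥ 1` vertices with `c` colours,
`γᵗ(P^c) ≥ (n + 2c)/5`. -/
theorem path_tropDomNum_lower_bound
    (n c : ℕ) (hn : 1 ≤ n) (col : Fin n → Fin c)
    (hsurj : Function.Surjective col) :
    n + 2 * c ≤ 5 * tropDomNum (SimpleGraph.pathGraph n) col := by
  classical
  have hne : {k : ℕ | ∃ S : Finset (Fin n), IsDomSet (SimpleGraph.pathGraph n) S ∧
      IsTropical col S ∧ S.card = k}.Nonempty := by
    refine ⟨(Finset.univ : Finset (Fin n)).card, Finset.univ, fun v => Or.inl (by simp),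
      fun ch => ?_, rfl⟩
    obtain ⟨v, hv⟩ := hsurj ch
    exact ⟨v, by simp, hv⟩
  obtain ⟨S, hdom, htrop, hcard⟩ := Nat.sInf_mem hne
  have h1 : n ≤ 3 * S.card := dom_card_bound n S hdom
  have h2 : c ≤ S.card := by
    have : (Finset.univ : Finset (Fin c)) ⊆ S.image col := by
      intro ch _
      obtain ⟨v, hv, hcv⟩ := htrop ch
      exact Finset.mem_image.2 ⟨v, hv, hcv⟩
    calc c = (Finset.univ : Finset (Fin c)).card := by simp
      _ ≤ (S.image col).card := Finset.card_le_card this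
      _ ≤ S.card := Finset.card_image_le
  rw [tropDomNum, ← hcard]
  omega
end

section
/- Let P^c be a vertex-coloured path on n ≥ 1 vertices with c colours. Then the tropical domination number satisfies γᵗ(P^c) ≤ (n + 2c)/3, i.e. 3·γᵗ(P^c) ≤ n + 2c. -/
open Finset

/-- Key combinatorial lemma, stated over ℕ-indexed paths: for every colouring of
`{0, ..., n-1}` there is a set `S ⊆ range n` that dominates the path, contains every
colour appearing on `range n`, and has `3·|S| ≤ n + 2·(number of colours)`. -/
theorem path_key {C : Type*} [DecidableEq C] (n : ℕ) (col : ℕ → C) :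
    ∃ S : Finset ℕ, S ⊆ range n ∧
      (∀ i < n, ∃ s ∈ S, s = i ∨ s + 1 = i ∨ i + 1 = s) ∧
      (∀ i < n, ∃ s ∈ S, col s = col i) ∧
      3 * S.card ≤ n + 2 * ((range n).image col).card := by
  induction n using Nat.strong_induction_on generalizing col with
  | _ n IH =>
  rcases lt_or_ge n 4 with h4 | h4
  · -- base cases n = 0, 1, 2, 3
    interval_cases n
    · exact ⟨∅, by simp, fun i hi => by omega, fun i hi => by omega, by simp⟩
    · -- n = 1
      have hpos : 0 < ((range 1).image col).card :=
        card_pos.mpr ⟨col 0, mem_image_of_mem col (by decide)⟩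
      refine ⟨{0}, by decide, fun i hi => ⟨0, mem_singleton_self 0, by omega⟩, ?_, ?_⟩
      · intro i hi
        have h : i = 0 := by omega
        exact ⟨0, mem_singleton_self 0, by rw [h]⟩
      · simp only [card_singleton]; omega
    · -- n = 2
      by_cases h01 : col 0 = col 1
      · have hpos : 0 < ((range 2).image col).card :=
          card_pos.mpr ⟨col 0, mem_image_of_mem col (by decide)⟩
        refine ⟨{0}, by decide, fun i hi => ⟨0, mem_singleton_self 0, by omega⟩,
          fun i hi => ⟨0, mem_singleton_self 0, ?_⟩, ?_⟩
        · have : i = 0 ∨ i = 1 := by omega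
          rcases this with h | h <;> rw [h]
          exact h01
        · simp only [card_singleton]; omega
      · have hc2 : 2 ≤ ((range 2).image col).card :=
          Finset.one_lt_card.mpr ⟨col 0, mem_image_of_mem col (by decide),
            col 1, mem_image_of_mem col (by decide), h01⟩
        refine ⟨{0, 1}, by decide, ?_, ?_, ?_⟩
        · intro i hi
          have : i = 0 ∨ i = 1 := by omega
          rcases this with h | h <;> subst h
          · exact ⟨0, by decide, by omega⟩
          · exact ⟨1, by decide, by omega⟩
        · intro i hi
          have : i = 0 ∨ i = 1 := by omega
          rcases this with h | h <;> subst h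
          · exact ⟨0, by decide, rfl⟩
          · exact ⟨1, by decide, rfl⟩
        · have : ({0, 1} : Finset ℕ).card = 2 := by decide
          omega
    · -- n = 3
      by_cases h01 : col 0 = col 1
      · by_cases h12 : col 1 = col 2
        · -- all equal: S = {1}
          refine ⟨{1}, by decide, fun i hi => ⟨1, mem_singleton_self 1, by omega⟩,
            fun i hi => ⟨1, mem_singleton_self 1, ?_⟩, ?_⟩
          · have : i = 0 ∨ i = 1 ∨ i = 2 := by omega
            rcases this with h | h | h <;> rw [h]
            · exact h01.symm
            · rw [h12]
          · simp only [card_singleton]; omega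
        · -- col 0 = col 1 ≠ col 2 : S = {1, 2}
          have hc2 : 2 ≤ ((range 3).image col).card :=
            Finset.one_lt_card.mpr ⟨col 1, mem_image_of_mem col (by decide),
              col 2, mem_image_of_mem col (by decide), h12⟩
          refine ⟨{1, 2}, by decide, ?_, ?_, ?_⟩
          · intro i hi
            exact ⟨1, by decide, by omega⟩
          · intro i hi
            have : i = 0 ∨ i = 1 ∨ i = 2 := by omega
            rcases this with h | h | h <;> subst h
            · exact ⟨1, by decide, h01.symm⟩
            · exact ⟨1, by decide, rfl⟩
            · exact ⟨2, by decide, rfl⟩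
          · have : ({1, 2} : Finset ℕ).card = 2 := by decide
            omega
      · -- col 0 ≠ col 1 : S = {0, 1}
        have hc2 : 2 ≤ ((range 3).image col).card :=
          Finset.one_lt_card.mpr ⟨col 0, mem_image_of_mem col (by decide),
            col 1, mem_image_of_mem col (by decide), h01⟩
        by_cases h2 : col 2 = col 0 ∨ col 2 = col 1
        · refine ⟨{0, 1}, by decide, ?_, ?_, ?_⟩
          · intro i hi
            exact ⟨1, by decide, by omega⟩
          · intro i hi
            have : i = 0 ∨ i = 1 ∨ i = 2 := by omega
            rcases this with h | h | h <;> subst h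
            · exact ⟨0, by decide, rfl⟩
            · exact ⟨1, by decide, rfl⟩
            · rcases h2 with h | h
              · exact ⟨0, by decide, h.symm⟩
              · exact ⟨1, by decide, h.symm⟩
          · have : ({0, 1} : Finset ℕ).card = 2 := by decide
            omega
        · push_neg at h2
          have hc3 : 3 ≤ ((range 3).image col).card := by
            have hcard : ({col 0, col 1, col 2} : Finset C).card = 3 := by
              rw [card_insert_of_notMem (by simp [h01, Ne.symm h2.1]),
                card_insert_of_notMem (by simp [Ne.symm h2.2]), card_singleton]
            have hsub : ({col 0, col 1, col 2} : Finset C) ⊆ (range 3).image col := by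
              intro x hx
              simp only [mem_insert, mem_singleton] at hx
              rcases hx with h | h | h <;> subst h <;>
                exact mem_image_of_mem col (by decide)
            calc 3 = ({col 0, col 1, col 2} : Finset C).card := hcard.symm
              _ ≤ _ := card_le_card hsub
          refine ⟨{0, 1, 2}, by decide, ?_, ?_, ?_⟩
          · intro i hi
            exact ⟨1, by decide, by omega⟩
          · intro i hi
            have : i = 0 ∨ i = 1 ∨ i = 2 := by omega
            rcases this with h | h | h <;> subst h
            · exact ⟨0, by decide, rfl⟩
            · exact ⟨1, by decide, rfl⟩
            · exact ⟨2, by decide, rfl⟩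
          · have : ({0, 1, 2} : Finset ℕ).card = 3 := by decide
            omega
  · -- n ≥ 4
    by_cases hA : ∃ i < n, ∀ j < n, j ≠ i → col j ≠ col i
    · -- a vertex with a globally unique colour: delete it and glue
      obtain ⟨i, hin, huniq⟩ := hA
      set col' : ℕ → C := fun j => if j < i then col j else col (j + 1) with hcol'
      obtain ⟨S₁, hsub₁, hdom₁, htrop₁, hcard₁⟩ := IH (n - 1) (by omega) col'
      set f : ℕ → ℕ := fun j => if j < i then j else j + 1 with hf
      have hfS : ∀ s ∈ S₁, s < n - 1 := fun s hs => mem_range.mp (hsub₁ hs)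
      have hfpos : ∀ s, s < i → f s = s := by
        intro s hs; simp [hf, hs]
      have hfneg : ∀ s, ¬ s < i → f s = s + 1 := by
        intro s hs; simp [hf, hs]
      have hcolf : ∀ s, col (f s) = col' s := by
        intro s
        by_cases hsi : s < i
        · simp [hf, hcol', hsi]
        · simp [hf, hcol', hsi]
      refine ⟨insert i (S₁.image f), ?_, ?_, ?_, ?_⟩
      · intro x hx
        rcases mem_insert.mp hx with h | h
        · exact mem_range.mpr (h ▸ hin)
        · obtain ⟨j, hj, rfl⟩ := mem_image.mp h
          have := hfS j hj
          rw [mem_range]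
          by_cases hji : j < i
          · rw [hfpos j hji]; omega
          · rw [hfneg j hji]; omega
      · -- domination
        intro v hv
        by_cases hvi : v = i
        · exact ⟨i, mem_insert_self i _, by omega⟩
        rcases Nat.lt_or_ge v i with hlt | hge
        · obtain ⟨s, hs, hrel⟩ := hdom₁ v (by omega)
          by_cases hsi : s < i
          · refine ⟨f s, mem_insert_of_mem (mem_image_of_mem f hs), ?_⟩
            rw [hfpos s hsi]
            omega
          · -- s ≥ i and v < i force v + 1 = s = i, so i dominates v
            exact ⟨i, mem_insert_self i _, by omega⟩
        · have hgt : i < v := by omega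
          obtain ⟨s, hs, hrel⟩ := hdom₁ (v - 1) (by omega)
          by_cases hsi : s < i
          · exact ⟨i, mem_insert_self i _, by omega⟩
          · refine ⟨f s, mem_insert_of_mem (mem_image_of_mem f hs), ?_⟩
            rw [hfneg s hsi]
            omega
      · -- tropicality
        intro v hv
        by_cases hvi : v = i
        · exact ⟨i, mem_insert_self i _, by rw [hvi]⟩
        rcases Nat.lt_or_ge v i with hlt | hge
        · obtain ⟨s, hs, hcols⟩ := htrop₁ v (by omega)
          refine ⟨f s, mem_insert_of_mem (mem_image_of_mem f hs), ?_⟩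
          rw [hcolf s, hcols]
          simp [hcol', hlt]
        · have hgt : i < v := by omega
          obtain ⟨s, hs, hcols⟩ := htrop₁ (v - 1) (by omega)
          refine ⟨f s, mem_insert_of_mem (mem_image_of_mem f hs), ?_⟩
          rw [hcolf s, hcols]
          have h1 : ¬ (v - 1 < i) := by omega
          have h2 : v - 1 + 1 = v := by omega
          simp only [hcol', if_neg h1, h2]
      · -- cardinality
        have h0 : (S₁.image f).card ≤ S₁.card := card_image_le
        have h1 : (insert i (S₁.image f)).card ≤ (S₁.image f).card + 1 :=
          card_insert_le _ _
        have hci : col i ∈ (range n).image col :=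
          mem_image_of_mem col (mem_range.mpr hin)
        have hsubc : (range (n - 1)).image col' ⊆ ((range n).image col).erase (col i) := by
          intro x hx
          obtain ⟨j, hj, rfl⟩ := mem_image.mp hx
          have hjn : j < n - 1 := mem_range.mp hj
          have hfj : f j < n := by
            by_cases hji : j < i
            · rw [hfpos j hji]; omega
            · rw [hfneg j hji]; omega
          have hfji : f j ≠ i := by
            by_cases hji : j < i
            · rw [hfpos j hji]; omega
            · rw [hfneg j hji]; omega
          rw [← hcolf j]
          exact mem_erase.mpr ⟨huniq (f j) hfj hfji, mem_image_of_mem col (mem_range.mpr hfj)⟩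
        have hle2 : ((range (n - 1)).image col').card + 1 ≤ ((range n).image col).card := by
          have ha := card_le_card hsubc
          have hb := card_erase_of_mem hci
          have hcpos : 0 < ((range n).image col).card := card_pos.mpr ⟨col i, hci⟩
          omega
        omega
    · -- every colour appears at least twice
      push_neg at hA
      have hdup : ∀ i < n, ∃ j, j < n ∧ j ≠ i ∧ col j = col i := by
        intro i hi
        obtain ⟨j, hj1, hj2, hj3⟩ := hA i hi
        exact ⟨j, hj1, hj2, hj3⟩
      by_cases hB1 : (col (n - 3) ∈ (range (n - 3)).image col ∨ col (n - 3) = col (n - 2)) ∧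
          (col (n - 1) ∈ (range (n - 3)).image col ∨ col (n - 1) = col (n - 2))
      · -- main chunk case: prefix of length n-3 plus the vertex n-2
        obtain ⟨S', hsub', hdom', htrop', hcard'⟩ := IH (n - 3) (by omega) col
        refine ⟨insert (n - 2) S', ?_, ?_, ?_, ?_⟩
        · intro x hx
          rcases mem_insert.mp hx with h | h
          · rw [mem_range]; omega
          · have := mem_range.mp (hsub' h); rw [mem_range]; omega
        · intro v hv
          by_cases hv3 : v < n - 3
          · obtain ⟨s, hs, hrel⟩ := hdom' v hv3
            exact ⟨s, mem_insert_of_mem hs, hrel⟩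
          · exact ⟨n - 2, mem_insert_self _ _, by omega⟩
        · intro v hv
          by_cases hv3 : v < n - 3
          · obtain ⟨s, hs, hcols⟩ := htrop' v hv3
            exact ⟨s, mem_insert_of_mem hs, hcols⟩
          · have hv' : v = n - 3 ∨ v = n - 2 ∨ v = n - 1 := by omega
            rcases hv' with h | h | h <;> subst h
            · rcases hB1.1 with hm | he
              · obtain ⟨j, hj, hcj⟩ := mem_image.mp hm
                obtain ⟨s, hs, hcols⟩ := htrop' j (mem_range.mp hj)
                exact ⟨s, mem_insert_of_mem hs, by rw [hcols, hcj]⟩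
              · exact ⟨n - 2, mem_insert_self _ _, he.symm⟩
            · exact ⟨n - 2, mem_insert_self _ _, rfl⟩
            · rcases hB1.2 with hm | he
              · obtain ⟨j, hj, hcj⟩ := mem_image.mp hm
                obtain ⟨s, hs, hcols⟩ := htrop' j (mem_range.mp hj)
                exact ⟨s, mem_insert_of_mem hs, by rw [hcols, hcj]⟩
              · exact ⟨n - 2, mem_insert_self _ _, he.symm⟩
        · have h1 : (insert (n - 2) S').card ≤ S'.card + 1 := card_insert_le _ _
          have h2 : ((range (n - 3)).image col).card ≤ ((range n).image col).card :=
            card_le_card (image_subset_image (by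
              intro x hx; rw [mem_range] at *; omega))
          omega
      · -- exceptional case: col (n-1) = col (n-3) is a colour not present before
        have hkey : col (n - 1) ∉ (range (n - 3)).image col ∧ col (n - 1) ≠ col (n - 2) := by
          rcases not_and_or.mp hB1 with h | h
          · push_neg at h
            obtain ⟨j, hj, hjne, hjc⟩ := hdup (n - 3) (by omega)
            have hj' : j = n - 1 := by
              by_contra hne
              have hcase : j < n - 3 ∨ j = n - 2 := by omega
              rcases hcase with hlt | he
              · exact h.1 (by rw [← hjc]; exact mem_image_of_mem col (mem_range.mpr hlt))
              · exact h.2 (by rw [← hjc, he])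
            subst hj'
            constructor
            · intro hmem
              rw [hjc] at hmem
              exact h.1 hmem
            · intro heq
              apply h.2
              rw [← hjc]
              exact heq
          · push_neg at h; exact h
        have hαγ : col (n - 1) = col (n - 3) := by
          obtain ⟨j, hj, hjne, hjc⟩ := hdup (n - 1) (by omega)
          have hcase : j < n - 3 ∨ j = n - 3 ∨ j = n - 2 := by omega
          rcases hcase with hlt | he | he
          · exact absurd (by rw [← hjc]; exact mem_image_of_mem col (mem_range.mpr hlt)) hkey.1
          · rw [← hjc, he]
          · exact absurd (by rw [← hjc, he]) hkey.2
        have hβP : col (n - 2) ∈ (range (n - 3)).image col := by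
          obtain ⟨j, hj, hjne, hjc⟩ := hdup (n - 2) (by omega)
          have hcase : j < n - 3 ∨ j = n - 3 ∨ j = n - 1 := by omega
          rcases hcase with hlt | he | he
          · rw [← hjc]; exact mem_image_of_mem col (mem_range.mpr hlt)
          · exfalso; apply hkey.2; rw [hαγ, ← hjc, he]
          · exfalso; apply hkey.2; rw [← hjc, he]
        obtain ⟨S₀, hsub₀, hdom₀, htrop₀, hcard₀⟩ := IH (n - 4) (by omega) col
        refine ⟨insert (n - 4) (insert (n - 1) S₀), ?_, ?_, ?_, ?_⟩
        · intro x hx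
          rcases mem_insert.mp hx with h | h
          · rw [mem_range]; omega
          rcases mem_insert.mp h with h | h
          · rw [mem_range]; omega
          · have := mem_range.mp (hsub₀ h); rw [mem_range]; omega
        · intro v hv
          by_cases hv4 : v < n - 4
          · obtain ⟨s, hs, hrel⟩ := hdom₀ v hv4
            exact ⟨s, mem_insert_of_mem (mem_insert_of_mem hs), hrel⟩
          · by_cases hv' : v ≤ n - 3
            · exact ⟨n - 4, mem_insert_self _ _, by omega⟩
            · exact ⟨n - 1, mem_insert_of_mem (mem_insert_self _ _), by omega⟩
        · intro v hv
          by_cases hv4 : v < n - 4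
          · obtain ⟨s, hs, hcols⟩ := htrop₀ v hv4
            exact ⟨s, mem_insert_of_mem (mem_insert_of_mem hs), hcols⟩
          · have hv' : v = n - 4 ∨ v = n - 3 ∨ v = n - 2 ∨ v = n - 1 := by omega
            rcases hv' with h | h | h | h <;> subst h
            · exact ⟨n - 4, mem_insert_self _ _, rfl⟩
            · exact ⟨n - 1, mem_insert_of_mem (mem_insert_self _ _), hαγ⟩
            · obtain ⟨j, hj, hcj⟩ := mem_image.mp hβP
              have hj3 := mem_range.mp hj
              by_cases hj4 : j < n - 4
              · obtain ⟨s, hs, hcols⟩ := htrop₀ j hj4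
                exact ⟨s, mem_insert_of_mem (mem_insert_of_mem hs), by rw [hcols, hcj]⟩
              · have hje : j = n - 4 := by omega
                exact ⟨n - 4, mem_insert_self _ _, by rw [← hje, hcj]⟩
            · exact ⟨n - 1, mem_insert_of_mem (mem_insert_self _ _), rfl⟩
        · -- cardinality
          have h1 : (insert (n - 4) (insert (n - 1) S₀)).card ≤ S₀.card + 2 := by
            have ha := card_insert_le (n - 4) (insert (n - 1) S₀)
            have hb := card_insert_le (n - 1) S₀
            omega
          have hα : col (n - 1) ∉ (range (n - 4)).image col := by
            intro hmem
            apply hkey.1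
            exact image_subset_image (by
              intro x hx; rw [mem_range] at *; omega) hmem
          have h2 : ((range (n - 4)).image col).card + 1 ≤ ((range n).image col).card := by
            have hsub' : insert (col (n - 1)) ((range (n - 4)).image col) ⊆
                (range n).image col := by
              intro x hx
              rcases mem_insert.mp hx with h | h
              · rw [h]; exact mem_image_of_mem col (mem_range.mpr (by omega))
              · exact image_subset_image (by
                  intro y hy; rw [mem_range] at *; omega) h
            have hle := card_le_card hsub'
            rw [card_insert_of_notMem hα] at hle
            omega
          omega

/-- for a vertex-coloured path on `n ≥ 1` vertices with `c` colours,
`γᵗ(P^c) ≤ (n + 2c)/3`, i.e. `3·γᵗ(P^c) ≤ n + 2c`. -/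
theorem path_tropDomNum_upper_bound
    (n c : ℕ) (hn : 1 ≤ n) (col : Fin n → Fin c)
    (hsurj : Function.Surjective col) :
    3 * tropDomNum (SimpleGraph.pathGraph n) col ≤ n + 2 * c := by
  have h0 : 0 < n := hn
  set colN : ℕ → Fin c := fun j => if h : j < n then col ⟨j, h⟩ else col ⟨0, h0⟩ with hcolN
  obtain ⟨S, hsub, hdom, htrop, hcard⟩ := path_key n colN
  have hlt : ∀ m ∈ S, m < n := fun m hm => mem_range.mp (hsub hm)
  set Sf : Finset (Fin n) := S.attachFin hlt with hSf
  have hmem : ∀ a : Fin n, a ∈ Sf ↔ (a : ℕ) ∈ S := fun a => Finset.mem_attachFin hlt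
  have hdomf : IsDomSet (SimpleGraph.pathGraph n) Sf := by
    intro v
    obtain ⟨s, hsS, hrel⟩ := hdom v.1 v.2
    rcases hrel with h | h | h
    · left; exact (hmem v).mpr (h ▸ hsS)
    · right
      exact ⟨⟨s, hlt s hsS⟩, (hmem _).mpr hsS, SimpleGraph.pathGraph_adj.mpr (Or.inl h)⟩
    · right
      exact ⟨⟨s, hlt s hsS⟩, (hmem _).mpr hsS, SimpleGraph.pathGraph_adj.mpr (Or.inr h)⟩
  have htropf : IsTropical col Sf := by
    intro ch
    obtain ⟨w, hw⟩ := hsurj ch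
    obtain ⟨s, hsS, hcol⟩ := htrop w.1 w.2
    refine ⟨⟨s, hlt s hsS⟩, (hmem _).mpr hsS, ?_⟩
    have h1 : colN s = col ⟨s, hlt s hsS⟩ := by
      simp only [hcolN, dif_pos (hlt s hsS)]
    have h2 : colN w.1 = col w := by
      simp only [hcolN, dif_pos w.2]
    rw [← h1, hcol, h2, hw]
  have hle : tropDomNum (SimpleGraph.pathGraph n) col ≤ Sf.card :=
    Nat.sInf_le ⟨Sf, hdomf, htropf, rfl⟩
  have hcS : Sf.card = S.card := Finset.card_attachFin S hlt
  have hc : ((range n).image colN).card ≤ c := by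
    calc ((range n).image colN).card ≤ (Finset.univ : Finset (Fin c)).card :=
          Finset.card_le_card (Finset.subset_univ _)
      _ = c := Finset.card_fin c
  have := hcard
  omega
end

section
/- Let G be the intersection graph of closed real intervals I_1 = [l_1, r_1], …, I_n = [l_n, r_n] with l_i ≤ r_i (vertices i ≠ j adjacent iff I_i ∩ I_j ≠ ∅), where the vertices are ordered so that r_1 ≤ r_2 ≤ … ≤ r_n. Let U ⊆ {1, …, n}, let i be the largest element of U, and suppose U dominates the set {1, …, i} (every j with 1 ≤ j ≤ i either lies in U or is adjacent to some element of U). Then U dominates exactly the same vertices of G as the set {1, …, i} does; in particular, U is a dominating set of G if and only if {1, …, i} is. -/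
/-- The intersection graph of the closed intervals `[l i, r i]`, `i : Fin n`:
distinct vertices are adjacent iff their intervals meet. -/
def intervalGraph (n : ℕ) (l r : Fin n → ℝ) : SimpleGraph (Fin n) where
  Adj i j := i ≠ j ∧ (Set.Icc (l i) (r i) ∩ Set.Icc (l j) (r j)).Nonempty
  symm := by
    constructor
    intro i j h
    exact ⟨h.1.symm, by rw [Set.inter_comm]; exact h.2⟩
  loopless := by
    constructor
    intro i h
    exact h.1 rfl

/-- `U` dominates the vertex `k` in `G`: `k ∈ U` or `k` is adjacent to a vertex of `U`. -/
def DominatesVertex {V : Type*} (G : SimpleGraph V) (U : Finset V) (k : V) : Prop :=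
  k ∈ U ∨ ∃ u ∈ U, G.Adj u k

/-!
If `k > i` is adjacent to some `j ≤ i`, the interval of `k` contains a point `≤ r j ≤ r i` and
ends at `r k ≥ r i`, so it contains `r i`: `k` is then adjacent to `i = max U` itself. Hence every
vertex beyond `i` dominated by the prefix `{1, …, i}` is dominated by `U`, while the prefix
contains `U` and, by hypothesis, everything up to `i` is dominated by `U`.
-/

theorem DominatesVertex.mono {V : Type*} {G : SimpleGraph V} {U W : Finset V} (hUW : U ⊆ W)
    {k : V} : DominatesVertex G U k → DominatesVertex G W k
  | .inl hk => .inl (hUW hk)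
  | .inr ⟨u, hu, hadj⟩ => .inr ⟨u, hUW hu, hadj⟩

theorem intervalGraph_adj_of_adj_of_le_of_lt {n : ℕ} {l r : Fin n → ℝ} {i j k : Fin n}
    (hlr : l i ≤ r i) (hmono : Monotone r) (hji : j ≤ i) (hik : i < k)
    (hadj : (intervalGraph n l r).Adj j k) : (intervalGraph n l r).Adj i k := by
  obtain ⟨-, x, ⟨-, hxj⟩, hkx, -⟩ := hadj
  exact ⟨hik.ne, r i, ⟨hlr, le_rfl⟩, hkx.trans (hxj.trans (hmono hji)), hmono hik.le⟩

theorem dominatesVertex_of_dominatesVertex_Iic {n : ℕ} {l r : Fin n → ℝ} {i k : Fin n}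
    (hlr : l i ≤ r i) (hmono : Monotone r) {U : Finset (Fin n)} (hiU : i ∈ U) (hik : i < k)
    (hdom : DominatesVertex (intervalGraph n l r) (Finset.Iic i) k) :
    DominatesVertex (intervalGraph n l r) U k := by
  rcases hdom with hk | ⟨j, hj, hadj⟩
  · exact absurd (Finset.mem_Iic.mp hk) hik.not_ge
  · exact .inr ⟨i, hiU, intervalGraph_adj_of_adj_of_le_of_lt hlr hmono (Finset.mem_Iic.mp hj)
      hik hadj⟩

/-- in an interval graph whose vertices are ordered non-decreasingly by
right endpoints, if `U` contains its maximum element `i` and dominates `{1, …, i}`, then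
`U` dominates exactly the same vertices as the prefix `{1, …, i}`; in particular `U` is a
dominating set iff `{1, …, i}` is. -/
theorem prefix_dominating_same_vertices
    (n : ℕ) (l r : Fin n → ℝ) (hlr : ∀ i, l i ≤ r i) (hmono : Monotone r)
    (U : Finset (Fin n)) (hU : U.Nonempty) (i : Fin n) (hi : i = U.max' hU)
    (hdom : ∀ j : Fin n, j ≤ i → DominatesVertex (intervalGraph n l r) U j) :
    (∀ k : Fin n, DominatesVertex (intervalGraph n l r) U k ↔
        DominatesVertex (intervalGraph n l r) (Finset.Iic i) k) ∧
      ((∀ k : Fin n, DominatesVertex (intervalGraph n l r) U k) ↔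
        (∀ k : Fin n, DominatesVertex (intervalGraph n l r) (Finset.Iic i) k)) := by
  have hiU : i ∈ U := hi ▸ U.max'_mem hU
  have hUIic : U ⊆ Finset.Iic i := fun u hu => Finset.mem_Iic.mpr (hi ▸ U.le_max' u hu)
  have same : ∀ k : Fin n, DominatesVertex (intervalGraph n l r) U k ↔
      DominatesVertex (intervalGraph n l r) (Finset.Iic i) k := fun k =>
    ⟨DominatesVertex.mono hUIic, fun hk => (le_or_gt k i).elim (hdom k)
      fun hik => dominatesVertex_of_dominatesVertex_Iic (hlr i) hmono hiU hik hk⟩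
  exact ⟨same, forall_congr' same⟩
end
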